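/- In dimension N = 3, the constant a₂ = sup_{0<r<1} w₁(r)/w₀(r) equals 1/(12π), where w₀(r) = (1/(4π))(1/r − 1) and w₁(r) = (1/(48π²))[3(r−1) − 3 ln r − (r²−1)/2]. In particular a₂ < 1/4. -/

import Mathlib

/-!
Since `w₀(r) = (1 - r)/(4π r)`, the ratio is `w₁/w₀ = q(r)/(12π)` with
`q(r) = r (3(r - 1) - 3 log r - (r² - 1)/2)/(1 - r)`. One has `q < 1` on `(0, 1)`: after clearing
denominators this is `h(r) := 1/r + 3/2 - 3r + r²/2 + 3 log r > 0`, which holds because `h(1) = 0` and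
`h'(r) = (r - 1)³/r² < 0`. On the other hand `log r ≤ r - 1` gives `q(r) ≥ r(1 + r)/2`, so `q(r) → 1`
as `r → 1⁻` and the supremum of `q` is `1`.
-/

open Real Set Filter Topology

theorem csSup_image_eq_of_tendsto {α β : Type*} [ConditionallyCompleteLinearOrder β]
    [TopologicalSpace β] [OrderTopology β] {f : α → β} {s : Set α} {l : Filter α} [l.NeBot]
    {c : β} (hs : s ∈ l) (hle : ∀ x ∈ s, f x ≤ c) (hlim : Tendsto f l (𝓝 c)) :
    sSup (f '' s) = c :=
  (isLUB_of_mem_closure (forall_mem_image.2 hle)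
    (mem_closure_of_tendsto hlim (mem_of_superset hs fun _ hx => mem_image_of_mem f hx))).csSup_eq
    ((Filter.nonempty_of_mem hs).image f)

namespace Real

theorem inv_add_three_mul_log_pos {r : ℝ} (hr : r ∈ Ioo 0 1) :
    0 < r⁻¹ + 3 / 2 - 3 * r + r ^ 2 / 2 + 3 * log r := by
  let h : ℝ → ℝ := fun x => x⁻¹ + 3 / 2 - 3 * x + x ^ 2 / 2 + 3 * log x
  have hderiv : ∀ x ≠ 0, HasDerivAt h ((x - 1) ^ 3 / x ^ 2) x := fun x hx =>
    (((((hasDerivAt_inv hx).add_const (3 / 2)).sub ((hasDerivAt_id x).const_mul 3)).add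
      ((hasDerivAt_pow 2 x).div_const 2)).add ((hasDerivAt_log hx).const_mul 3)).congr_deriv
      (by field_simp; ring)
  have hanti : StrictAntiOn h (Ioc 0 1) := by
    refine strictAntiOn_of_deriv_neg (convex_Ioc 0 1) ?_ ?_
    · exact fun x hx => (hderiv x hx.1.ne').continuousAt.continuousWithinAt
    · intro x hx
      rw [interior_Ioc] at hx
      rw [(hderiv x hx.1.ne').deriv]
      exact div_neg_of_neg_of_pos (Odd.pow_neg (by decide) (by linarith [hx.2])) (pow_pos hx.1 2)
  have := hanti ⟨hr.1, hr.2.le⟩ ⟨one_pos, le_rfl⟩ hr.2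
  simp only [h, inv_one, log_one] at this
  linarith

end Real

noncomputable def ratioProfile (r : ℝ) : ℝ :=
  r * (3 * (r - 1) - 3 * log r - (r ^ 2 - 1) / 2) / (1 - r)

theorem ratioProfile_lt_one {r : ℝ} (hr : r ∈ Ioo 0 1) : ratioProfile r < 1 := by
  have hpos := mul_pos hr.1 (inv_add_three_mul_log_pos hr)
  have hinv := mul_inv_cancel₀ hr.1.ne'
  rw [ratioProfile, div_lt_one (by linarith [hr.2])]
  linarith

theorem mul_one_add_div_two_le_ratioProfile {r : ℝ} (hr : r ∈ Ioo 0 1) :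
    r * (1 + r) / 2 ≤ ratioProfile r := by
  have hlog := log_le_sub_one_of_pos hr.1
  rw [ratioProfile, le_div_iff₀ (by linarith [hr.2])]
  nlinarith [hr.1]

theorem tendsto_ratioProfile_nhdsLT_one : Tendsto ratioProfile (𝓝[<] 1) (𝓝 1) := by
  have hlower : Tendsto (fun r : ℝ => r * (1 + r) / 2) (𝓝[<] 1) (𝓝 1) := by
    have : Continuous (fun r : ℝ => r * (1 + r) / 2) := by fun_prop
    simpa using (this.tendsto 1).mono_left nhdsWithin_le_nhds
  refine tendsto_of_tendsto_of_tendsto_of_le_of_le' hlower tendsto_const_nhds ?_ ?_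
  · filter_upwards [Ioo_mem_nhdsLT one_pos] with r hr using
      mul_one_add_div_two_le_ratioProfile hr
  · filter_upwards [Ioo_mem_nhdsLT one_pos] with r hr using (ratioProfile_lt_one hr).le

theorem stmt5 (w0 w1 : ℝ → ℝ)
    (hw0 : ∀ r : ℝ, w0 r = (1 / (4 * Real.pi)) * (1 / r - 1))
    (hw1 : ∀ r : ℝ, w1 r =
      (1 / (48 * Real.pi ^ 2)) * (3 * (r - 1) - 3 * Real.log r - (r ^ 2 - 1) / 2)) :
    sSup ((fun r => w1 r / w0 r) '' Set.Ioo (0:ℝ) 1) = 1 / (12 * Real.pi) ∧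
    1 / (12 * Real.pi) < 1 / 4 := by
  have hratio : EqOn (fun r => w1 r / w0 r) (fun r => 1 / (12 * π) * ratioProfile r) (Ioo 0 1) := by
    intro r hr
    have : 1 - r ≠ 0 := by linarith [hr.2]
    simp only [hw0, hw1, ratioProfile]
    field_simp [hr.1.ne', pi_ne_zero]
    ring
  refine ⟨?_, ?_⟩
  · rw [hratio.image_eq]
    refine csSup_image_eq_of_tendsto (Ioo_mem_nhdsLT one_pos) (fun r hr => ?_) ?_
    · exact mul_le_of_le_one_right (by positivity) (ratioProfile_lt_one hr).le
    · simpa using tendsto_ratioProfile_nhdsLT_one.const_mul (1 / (12 * π))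
  · rw [div_lt_div_iff₀ (by positivity) (by norm_num)]
    linarith [pi_gt_three]
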